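/- arXiv:1412.4463 — 4 statements merged into one kernel-verified Lean document; each statement's English description precedes it below -/
import Mathlib

section
/- Let G be a data graph and S a binary relation on its nodes. Then S is definable by an REM if and only if for every pair (u,v) ∈ S there exists a data path w connecting u to v in G such that for every automorphism π of 𝔇 and all nodes u′, v′ of G, if π(w) connects u′ to v′ then (u′,v′) ∈ S. -/
/-- A data path `d₀ a₀ d₁ a₁ … a_{m−1} d_m`: a first data value followed by a
list of (letter, data value) pairs. -/
structure DataPath (A D : Type) where
  head : D
  tail : List (A × D)

namespace DataPath

/-- The last data value of a data path. -/
def lastVal {A D : Type} (w : DataPath A D) : D :=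
  ((w.tail.getLast?).map Prod.snd).getD w.head

/-- Concatenation of data paths (meaningful when `w₁.lastVal = w₂.head`). -/
def comp {A D : Type} (w₁ w₂ : DataPath A D) : DataPath A D :=
  ⟨w₁.head, w₁.tail ++ w₂.tail⟩

/-- Apply a map on data values to all data values of a data path. -/
def dmap {A D : Type} (π : D → D) (w : DataPath A D) : DataPath A D :=
  ⟨π w.head, w.tail.map (fun p => (p.1, π p.2))⟩

end DataPath

/-- Conditions over `k` registers. -/
inductive Cond (k : ℕ) where
  | top : Cond k
  | eq : Fin k → Cond k
  | ne : Fin k → Cond k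
  | conj : Cond k → Cond k → Cond k
  | disj : Cond k → Cond k → Cond k
  | neg : Cond k → Cond k

/-- Satisfaction of a condition at data value `d` under assignment `τ`
(`none` is the empty register `⊥`, unequal to every data value). -/
def CondSat {D : Type} {k : ℕ} (d : D) (τ : Fin k → Option D) : Cond k → Prop
  | .top => True
  | .eq i => τ i = some d
  | .ne i => τ i ≠ some d
  | .conj c₁ c₂ => CondSat d τ c₁ ∧ CondSat d τ c₂
  | .disj c₁ c₂ => CondSat d τ c₁ ∨ CondSat d τ c₂
  | .neg c => ¬ CondSat d τ c

/-- Regular expressions with memory over alphabet `A` with `k` registers. -/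
inductive REM (A : Type) (k : ℕ) where
  | eps : REM A k
  | letter : A → REM A k
  | plus : REM A k → REM A k → REM A k
  | concat : REM A k → REM A k → REM A k
  | iter : REM A k → REM A k
  | test : REM A k → Cond k → REM A k
  | bind : List (Fin k) → REM A k → REM A k

/-- Store `d` in each of the registers in `rs`. -/
def updReg {D : Type} {k : ℕ} (σ : Fin k → Option D) (rs : List (Fin k)) (d : D) :
    Fin k → Option D :=
  fun i => if i ∈ rs then some d else σ i

/-- The satisfaction relation `(e, w, σ) ⊢ σ'` of REMs on data paths. -/
inductive REMSat {A D : Type} {k : ℕ} :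
    REM A k → DataPath A D → (Fin k → Option D) → (Fin k → Option D) → Prop
  | eps (d : D) (σ : Fin k → Option D) : REMSat .eps ⟨d, []⟩ σ σ
  | letter (a : A) (d₁ d₂ : D) (σ : Fin k → Option D) :
      REMSat (.letter a) ⟨d₁, [(a, d₂)]⟩ σ σ
  | plusL {e₁ e₂ w σ σ'} : REMSat e₁ w σ σ' → REMSat (.plus e₁ e₂) w σ σ'
  | plusR {e₁ e₂ w σ σ'} : REMSat e₂ w σ σ' → REMSat (.plus e₁ e₂) w σ σ'
  | concat {e₁ e₂ w₁ w₂ σ σ₁ σ'} : w₁.lastVal = w₂.head →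
      REMSat e₁ w₁ σ σ₁ → REMSat e₂ w₂ σ₁ σ' →
      REMSat (.concat e₁ e₂) (w₁.comp w₂) σ σ'
  | iterBase {e w σ σ'} : REMSat e w σ σ' → REMSat (.iter e) w σ σ'
  | iterStep {e w₁ w₂ σ σ₁ σ'} : w₁.lastVal = w₂.head →
      REMSat e w₁ σ σ₁ → REMSat (.iter e) w₂ σ₁ σ' →
      REMSat (.iter e) (w₁.comp w₂) σ σ'
  | test {e c w σ σ'} : REMSat e w σ σ' → CondSat w.lastVal σ' c →
      REMSat (.test e c) w σ σ'
  | bind {rs e w σ σ'} : REMSat e w (updReg σ rs w.head) σ' →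
      REMSat (.bind rs e) w σ σ'

/-- The language of a `k`-REM: data paths accepted starting from the empty
assignment `⊥^k`. -/
def REMLang {A D : Type} {k : ℕ} (e : REM A k) : Set (DataPath A D) :=
  {w | ∃ σ' : Fin k → Option D, REMSat e w (fun _ => none) σ'}

/-- Regular expressions with equality over alphabet `A`. -/
inductive REE (A : Type) where
  | eps : REE A
  | letter : A → REE A
  | plus : REE A → REE A → REE A
  | concat : REE A → REE A → REE A
  | iter : REE A → REE A
  | eqTest : REE A → REE A
  | neTest : REE A → REE A

/-- The language of data paths of an REE. -/
inductive REELang {A D : Type} : REE A → DataPath A D → Prop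
  | eps (d : D) : REELang .eps ⟨d, []⟩
  | letter (a : A) (d₁ d₂ : D) : REELang (.letter a) ⟨d₁, [(a, d₂)]⟩
  | plusL {e₁ e₂ w} : REELang e₁ w → REELang (.plus e₁ e₂) w
  | plusR {e₁ e₂ w} : REELang e₂ w → REELang (.plus e₁ e₂) w
  | concat {e₁ e₂ w₁ w₂} : w₁.lastVal = w₂.head →
      REELang e₁ w₁ → REELang e₂ w₂ → REELang (.concat e₁ e₂) (w₁.comp w₂)
  | iterBase {e w} : REELang e w → REELang (.iter e) w
  | iterStep {e w₁ w₂} : w₁.lastVal = w₂.head →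
      REELang e w₁ → REELang (.iter e) w₂ → REELang (.iter e) (w₁.comp w₂)
  | eqTest {e w} : REELang e w → w.head = w.lastVal → REELang (.eqTest e) w
  | neTest {e w} : REELang e w → w.head ≠ w.lastVal → REELang (.neTest e) w

/-- A data graph: labeled edges over node type `V` and data values on nodes. -/
structure DataGraph (V A D : Type) where
  E : Set (V × A × V)
  ρ : V → D

/-- `Connects G u w v`: the data path `w` connects node `u` to node `v` in `G`. -/
inductive Connects {V A D : Type} (G : DataGraph V A D) : V → DataPath A D → V → Prop
  | nil (u : V) : Connects G u ⟨G.ρ u, []⟩ u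
  | cons {u v x : V} {a : A} {t : List (A × D)} :
      (u, a, v) ∈ G.E → Connects G v ⟨G.ρ v, t⟩ x →
      Connects G u ⟨G.ρ u, (a, G.ρ v) :: t⟩ x

/-- A block `↓r̄.a[c]` of a basic REM. -/
abbrev Block (A : Type) (k : ℕ) := List (Fin k) × A × Cond k

/-- The REM `↓r̄.a[c]` corresponding to a block. -/
def blockREM {A : Type} {k : ℕ} (b : Block A k) : REM A k :=
  .bind b.1 (.test (.letter b.2.1) b.2.2)

/-- The basic `k`-REM `↓r̄₁.a₁[c₁] · … · ↓r̄_m.a_m[c_m]` given by a list of blocks. -/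
def basicREM {A : Type} {k : ℕ} : List (Block A k) → REM A k
  | [] => .eps
  | [b] => blockREM b
  | b :: bs => .concat (blockREM b) (basicREM bs)

/-- `e` is a `k`-REM witness for `(u, v)` in `S`: some data path in its language
connects `u` to `v`, and every data path in its language only connects pairs in `S`. -/
def IsWitness {V A D : Type} {k : ℕ} (G : DataGraph V A D) (S : Set (V × V))
    (u v : V) (bs : List (Block A k)) : Prop :=
  (∃ w : DataPath A D, w ∈ REMLang (basicREM bs) ∧ Connects G u w v) ∧
  (∀ (u' v' : V) (w : DataPath A D),
      w ∈ REMLang (basicREM bs) → Connects G u' w v' → (u', v') ∈ S)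

/-- A single transition of the `k`-assignment graph `T_G`, labeled by a block. -/
def AssignStep {V A D : Type} {k : ℕ} (G : DataGraph V A D) (b : Block A k)
    (s s' : V × (Fin k → Option D)) : Prop :=
  (s.1, b.2.1, s'.1) ∈ G.E ∧ s'.2 = updReg s.2 b.1 (G.ρ s.1) ∧
    CondSat (G.ρ s'.1) s'.2 b.2.2

/-- A run in the `k`-assignment graph `T_G` along the blocks of a basic `k`-REM. -/
inductive AssignRun {V A D : Type} {k : ℕ} (G : DataGraph V A D) :
    List (Block A k) → V × (Fin k → Option D) → V × (Fin k → Option D) → Prop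
  | nil (s : V × (Fin k → Option D)) : AssignRun G [] s s
  | cons {b bs s s' s''} : AssignStep G b s s' → AssignRun G bs s' s'' →
      AssignRun G (b :: bs) s s''

/-- The binary relation `S_e` defined by an REE `e` on a data graph `G`. -/
def REEEval {V A D : Type} (G : DataGraph V A D) (e : REE A) : Set (V × V) :=
  {p : V × V | ∃ w : DataPath A D, REELang e w ∧ Connects G p.1 w p.2}

/-- Composition of binary relations. -/
def relComp {V : Type} (S₁ S₂ : Set (V × V)) : Set (V × V) :=
  {p : V × V | ∃ z : V, (p.1, z) ∈ S₁ ∧ (z, p.2) ∈ S₂}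

/-- The `=`-restriction `S^=` of a relation. -/
def eqRes {V A D : Type} (G : DataGraph V A D) (S : Set (V × V)) : Set (V × V) :=
  {p ∈ S | G.ρ p.1 = G.ρ p.2}

/-- The `≠`-restriction `S^≠` of a relation. -/
def neRes {V A D : Type} (G : DataGraph V A D) (S : Set (V × V)) : Set (V × V) :=
  {p ∈ S | G.ρ p.1 ≠ G.ρ p.2}

/-- Membership in the closure of a set `B` of binary relations under `+` (union)
and `∘` (composition). -/
inductive InClosure {V : Type} (B : Set (Set (V × V))) : Set (V × V) → Prop
  | base {S} : S ∈ B → InClosure B S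
  | union {S₁ S₂} : InClosure B S₁ → InClosure B S₂ → InClosure B (S₁ ∪ S₂)
  | comp {S₁ S₂} : InClosure B S₁ → InClosure B S₂ → InClosure B (relComp S₁ S₂)

/-- The base set `B₀ = {S_ε} ∪ {S_a | a ∈ Σ}`. -/
def B0 {V A D : Type} (G : DataGraph V A D) : Set (Set (V × V)) :=
  {S | S = REEEval G .eps ∨ ∃ a : A, S = REEEval G (.letter a)}

/-- The levels `L_i` of binary relations on a data graph. -/
def Level {V A D : Type} (G : DataGraph V A D) : ℕ → Set (Set (V × V))
  | 0 => {S | InClosure (B0 G) S}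
  | i + 1 => {S | InClosure
      ((Level G i) ∪ (eqRes G '' (Level G i)) ∪ (neRes G '' (Level G i))) S}

/-- The identity relation (neutral element for composition). -/
def relId (V : Type) : Set (V × V) := {p : V × V | p.1 = p.2}

/-- `LabelConnects G u l v`: some path from `u` to `v` in `G` has label word `l`. -/
inductive LabelConnects {V A D : Type} (G : DataGraph V A D) : V → List A → V → Prop
  | nil (u : V) : LabelConnects G u [] u
  | cons {u v x : V} {a : A} {l : List A} :
      (u, a, v) ∈ G.E → LabelConnects G v l x → LabelConnects G u (a :: l) x

/-- `q` is reachable from `p` in `G`. -/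
def Reachable {V A D : Type} (G : DataGraph V A D) (p q : V) : Prop :=
  ∃ w : DataPath A D, Connects G p w q

/-- Data graph homomorphism: preserves labeled edges and, on reachable pairs,
preserves and reflects equality of data values. -/
def IsDGHom {V A D : Type} (G : DataGraph V A D) (h : V → V) : Prop :=
  (∀ (p q : V) (a : A), (p, a, q) ∈ G.E → (h p, a, h q) ∈ G.E) ∧
  (∀ p q : V, Reachable G p q → (G.ρ p = G.ρ q ↔ G.ρ (h p) = G.ρ (h q)))

/-- A conjunctive regular data path query of arity `r`:
`Ans(z̄) := ⋀_i x_i →[e_i] y_i` where each `e_i` is an REM. -/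
structure CRDPQ (A : Type) (r : ℕ) where
  nvars : ℕ
  m : ℕ
  src : Fin m → Fin nvars
  tgt : Fin m → Fin nvars
  nreg : Fin m → ℕ
  expr : (i : Fin m) → REM A (nreg i)
  out : Fin r → Fin nvars

/-- The answer `Q(G)` of a CRDPQ on a data graph. -/
def CRDPQEval {V A D : Type} {r : ℕ} (G : DataGraph V A D) (Q : CRDPQ A r) :
    Set (Fin r → V) :=
  {t | ∃ μ : Fin Q.nvars → V,
        (∀ i : Fin Q.m, ∃ w : DataPath A D,
            w ∈ REMLang (Q.expr i) ∧ Connects G (μ (Q.src i)) w (μ (Q.tgt i))) ∧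
        t = μ ∘ Q.out}

/-- `S` is definable by a union of conjunctive regular data path queries. -/
def UCRDPQDefinable {V A D : Type} {r : ℕ} (G : DataGraph V A D)
    (S : Set (Fin r → V)) : Prop :=
  ∃ Qs : List (CRDPQ A r), S = {t | ∃ Q ∈ Qs, t ∈ CRDPQEval G Q}


namespace DataPath

lemma head_dmap {A D : Type} (π : D → D) (w : DataPath A D) : (dmap π w).head = π w.head := rfl

lemma lastVal_dmap {A D : Type} (π : D → D) (w : DataPath A D) :
    (dmap π w).lastVal = π w.lastVal := by
  rcases w with ⟨h, t⟩
  simp only [dmap, lastVal, List.getLast?_map]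
  cases ht : t.getLast? <;> simp

lemma dmap_comp {A D : Type} (π : D → D) (w₁ w₂ : DataPath A D) :
    dmap π (w₁.comp w₂) = (dmap π w₁).comp (dmap π w₂) := by
  simp [dmap, comp]

end DataPath

lemma condSat_map_iff {D : Type} {k : ℕ} (π : D ≃ D) (d : D) (τ : Fin k → Option D) (c : Cond k) :
    CondSat (π d) (fun i => (τ i).map π) c ↔ CondSat d τ c := by
  induction c with
  | top => simp [CondSat]
  | eq i => simp only [CondSat]
            cases hτ : τ i <;> simp [Equiv.apply_eq_iff_eq]
  | ne i => simp only [CondSat, ne_eq]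
            cases hτ : τ i <;> simp [Equiv.apply_eq_iff_eq]
  | conj c₁ c₂ ih₁ ih₂ => simp only [CondSat]; rw [ih₁, ih₂]
  | disj c₁ c₂ ih₁ ih₂ => simp only [CondSat]; rw [ih₁, ih₂]
  | neg c ih => simp only [CondSat]; rw [ih]

lemma updReg_map {D : Type} {k : ℕ} (π : D ≃ D) (σ : Fin k → Option D) (rs : List (Fin k)) (d : D) :
    (fun i => ((updReg σ rs d) i).map π) = updReg (fun i => (σ i).map π) rs (π d) := by
  funext i; simp only [updReg]; split <;> rfl

lemma remSat_dmap {A D : Type} {k : ℕ} (π : D ≃ D) {e : REM A k} {w : DataPath A D}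
    {σ σ' : Fin k → Option D} (h : REMSat e w σ σ') :
    REMSat e (w.dmap ⇑π) (fun i => (σ i).map ⇑π) (fun i => (σ' i).map ⇑π) := by
  induction h with
  | eps d σ => exact REMSat.eps (π d) _
  | letter a d₁ d₂ σ => exact REMSat.letter a (π d₁) (π d₂) _
  | plusL h ih => exact REMSat.plusL ih
  | plusR h ih => exact REMSat.plusR ih
  | concat hlv h₁ h₂ ih₁ ih₂ =>
      rw [DataPath.dmap_comp]
      exact REMSat.concat (by rw [DataPath.lastVal_dmap, DataPath.head_dmap, hlv]) ih₁ ih₂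
  | iterBase h ih => exact REMSat.iterBase ih
  | iterStep hlv h₁ h₂ ih₁ ih₂ =>
      rw [DataPath.dmap_comp]
      exact REMSat.iterStep (by rw [DataPath.lastVal_dmap, DataPath.head_dmap, hlv]) ih₁ ih₂
  | test h hc ih =>
      exact REMSat.test ih (by rw [DataPath.lastVal_dmap]; exact (condSat_map_iff π _ _ _).mpr hc)
  | bind h ih =>
      apply REMSat.bind
      rw [DataPath.head_dmap, ← updReg_map]
      exact ih

lemma remLang_dmap {A D : Type} {k : ℕ} (π : D ≃ D) {e : REM A k} {w : DataPath A D}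
    (h : w ∈ REMLang (D := D) e) : w.dmap ⇑π ∈ REMLang (D := D) e := by
  obtain ⟨σ', hσ⟩ := h
  refine ⟨fun i => (σ' i).map ⇑π, ?_⟩
  have h2 := remSat_dmap π hσ
  have h3 : (fun i : Fin k => (Option.map ⇑π) ((fun _ : Fin k => (none : Option D)) i)) = (fun _ : Fin k => (none : Option D)) := rfl
  rw [h3] at h2
  exact h2

open Classical in
lemma exists_perm_map {D : Type} [Countable D] [Infinite D] {n : ℕ}
    (f g : Fin n → D) (h : ∀ i j, f i = f j ↔ g i = g j) :
    ∃ π : D ≃ D, ∀ i, π (f i) = g i := by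
  set s : Set D := Set.range f with hs
  set t : Set D := Set.range g with ht
  let φ : (x : ↥s) → ↥t := fun x => ⟨g (Classical.choose x.2), Set.mem_range_self _⟩
  have hspec : ∀ x : ↥s, f (Classical.choose x.2) = x.1 := fun x => Classical.choose_spec x.2
  have hφ : ∀ x : ↥s, (φ x : D) = g (Classical.choose x.2) := fun _ => rfl
  have hbij : Function.Bijective φ := by
    constructor
    · intro x y hxy
      have h2 : g (Classical.choose x.2) = g (Classical.choose y.2) := by
        rw [← hφ x, ← hφ y, hxy]
      have := (h _ _).mpr h2
      exact Subtype.ext (by rw [← hspec x, ← hspec y, this])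
    · rintro ⟨-, j, rfl⟩
      refine ⟨⟨f j, Set.mem_range_self j⟩, Subtype.ext ?_⟩
      rw [hφ]
      exact (h _ _).mp (hspec ⟨f j, Set.mem_range_self j⟩)
  let e : ↥s ≃ ↥t := Equiv.ofBijective φ hbij
  haveI : Infinite ↥(sᶜ) := by rw [Set.infinite_coe_iff]; exact (Set.finite_range f).infinite_compl
  haveI : Infinite ↥(tᶜ) := by rw [Set.infinite_coe_iff]; exact (Set.finite_range g).infinite_compl
  obtain ⟨d1⟩ := nonempty_denumerable ↥(sᶜ)
  obtain ⟨d2⟩ := nonempty_denumerable ↥(tᶜ)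
  let e' : ↥(sᶜ) ≃ ↥(tᶜ) := (@Denumerable.eqv _ d1).trans (@Denumerable.eqv _ d2).symm
  refine ⟨(Equiv.Set.sumCompl s).symm.trans ((e.sumCongr e').trans (Equiv.Set.sumCompl t)), ?_⟩
  intro i
  have h1 : (Equiv.Set.sumCompl s).symm (f i) = Sum.inl ⟨f i, Set.mem_range_self i⟩ :=
    Equiv.Set.sumCompl_symm_apply (x := ⟨f i, Set.mem_range_self i⟩)
  simp only [Equiv.trans_apply, h1, Equiv.sumCongr_apply, Sum.map_inl,
    Equiv.Set.sumCompl_apply_inl]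
  show (φ ⟨f i, Set.mem_range_self i⟩ : D) = g i
  rw [hφ]
  exact (h _ _).mp (hspec ⟨f i, Set.mem_range_self i⟩)

open Classical in
noncomputable def cndAux {D : Type} {k : ℕ} (idx : ℕ → Fin k) (d : D) : ℕ → List D → Cond k
  | _, [] => .top
  | j, dj :: rest =>
      .conj (if dj = d then .eq (idx j) else .ne (idx j)) (cndAux idx d (j + 1) rest)

noncomputable def mkREM {A D : Type} {k : ℕ} (idx : ℕ → Fin k) :
    List D → List (A × D) → REM A k
  | _, [] => .eps
  | prev, (a, d) :: rest =>
      .concat (.test (.letter a) (cndAux idx d 0 prev))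
        (.bind [idx prev.length] (mkREM idx (prev ++ [d]) rest))

noncomputable def orbitREM {A D : Type} {k : ℕ} (idx : ℕ → Fin k) (w : DataPath A D) :
    REM A k :=
  .bind [idx 0] (mkREM idx [w.head] w.tail)

lemma cndAux_sat {D : Type} {k : ℕ} (idx : ℕ → Fin k) (dflt d d' : D) (σ : Fin k → Option D) :
    ∀ (prev es : List D) (j : ℕ), prev.length = es.length →
    (∀ i, i < es.length → σ (idx (j + i)) = some (es.getD i dflt)) →
    (CondSat d' σ (cndAux idx d j prev) ↔
      ∀ i, i < prev.length → (prev.getD i dflt = d ↔ es.getD i dflt = d')) := by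
  intro prev
  induction prev with
  | nil => intro es j _ _; simp [cndAux, CondSat]
  | cons dj rest ih =>
    intro es j hlen hσ
    cases es with
    | nil => simp at hlen
    | cons e0 es' =>
      simp only [List.length_cons] at hlen
      have hσ0 : σ (idx j) = some e0 := by
        have := hσ 0 (by simp)
        simpa using this
      have hσ' : ∀ i, i < es'.length → σ (idx (j + 1 + i)) = some (es'.getD i dflt) := by
        intro i hi
        have := hσ (i + 1) (by simp; omega)
        rw [show j + (i + 1) = j + 1 + i by omega] at this
        simpa [List.getD_cons_succ] using this
      have hrest := ih es' (j + 1) (by omega) hσ'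
      simp only [cndAux, CondSat]
      rw [hrest]
      constructor
      · rintro ⟨h1, h2⟩ i hi
        cases i with
        | zero =>
          simp only [List.getD_cons_zero]
          by_cases hd : dj = d
          · simp only [hd, if_pos rfl, ↓reduceIte, CondSat] at h1
            rw [hσ0] at h1
            simp only [hd]
            constructor
            · intro _; exact (Option.some_injective _ h1)
            · intro h; exact trivial
          · simp only [if_neg hd, CondSat] at h1
            rw [hσ0] at h1
            constructor
            · intro h; exact absurd h hd
            · intro h; exact absurd (congrArg some h) h1
        | succ i' =>
          simp only [List.getD_cons_succ]
          exact h2 i' (by simpa using Nat.lt_of_succ_lt_succ hi)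
      · intro hall
        constructor
        · have h0 := hall 0 (by simp)
          simp only [List.getD_cons_zero] at h0
          by_cases hd : dj = d
          · simp only [if_pos hd, CondSat, hσ0]
            rw [h0.mp hd]
          · simp only [if_neg hd, CondSat, hσ0]
            intro hc
            exact hd (h0.mpr (Option.some_injective _ hc))
        · intro i hi
          have := hall (i + 1) (by simp; omega)
          simpa [List.getD_cons_succ] using this

lemma lastVal_single {A D : Type} (h d : D) (a : A) :
    (DataPath.mk h [(a, d)]).lastVal = d := by simp [DataPath.lastVal]

lemma mkREM_complete {A D : Type} {k : ℕ} (idx : ℕ → Fin k) (dflt : D) :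
    ∀ (l : List (A × D)) (prev : List D) (h : D) (σ : Fin k → Option D),
    (∀ i, i < prev.length → σ (idx i) = some (prev.getD i dflt)) →
    (∀ i j, i < prev.length + l.length → j < prev.length + l.length → idx i = idx j → i = j) →
    ∃ σ', REMSat (mkREM idx prev l) ⟨h, l⟩ σ σ' := by
  intro l
  induction l with
  | nil => intro prev h σ _ _; exact ⟨σ, REMSat.eps h σ⟩
  | cons p rest ih =>
    obtain ⟨a, d⟩ := p
    intro prev h σ hσ hinj
    set n := prev.length with hn
    have hcnd : CondSat d σ (cndAux idx d 0 prev) := by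
      rw [cndAux_sat idx dflt d d σ prev prev 0 rfl (by intro i hi; simpa using hσ i hi)]
      intro i _; rfl
    set σ₂ := updReg σ [idx n] d with hσ₂
    have hσ₂' : ∀ i, i < (prev ++ [d]).length → σ₂ (idx i) = some ((prev ++ [d]).getD i dflt) := by
      intro i hi
      simp only [List.length_append, List.length_singleton] at hi
      rcases Nat.lt_or_ge i n with hlt | hge
      · have hne : idx i ≠ idx n := fun he =>
          absurd (hinj i n (by simp only [List.length_cons]; omega) (by simp only [List.length_cons]; omega) he) (by omega)
        simp only [hσ₂, updReg, List.mem_singleton, if_neg hne]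
        rw [List.getD_append _ _ _ _ (by omega)]
        exact hσ i hlt
      · have hie : i = n := by omega
        subst hie
        simp only [hσ₂, updReg, List.mem_singleton, if_pos rfl]
        rw [List.getD_append_right _ _ _ _ (by omega)]
        simp [hn]
    have hinj' : ∀ i j, i < (prev ++ [d]).length + rest.length →
        j < (prev ++ [d]).length + rest.length → idx i = idx j → i = j := by
      intro i j hi hj he
      simp only [List.length_append, List.length_singleton] at hi hj
      exact hinj i j (by simp only [List.length_cons]; omega)
        (by simp only [List.length_cons]; omega) he
    obtain ⟨σ', hsat⟩ := ih (prev ++ [d]) d σ₂ hσ₂' hinj'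
    refine ⟨σ', ?_⟩
    show REMSat (.concat (.test (.letter a) (cndAux idx d 0 prev))
      (.bind [idx n] (mkREM idx (prev ++ [d]) rest))) ⟨h, (a, d) :: rest⟩ σ σ'
    have hcomp : (DataPath.mk h [(a, d)]).comp ⟨d, rest⟩ = DataPath.mk (A := A) h ((a, d) :: rest) := rfl
    rw [← hcomp]
    refine REMSat.concat (σ₁ := σ) (by rw [lastVal_single]) ?_ ?_
    · exact REMSat.test (REMSat.letter a h d σ) (by rw [lastVal_single]; exact hcnd)
    · exact REMSat.bind hsat

lemma mkREM_sound {A D : Type} {k : ℕ} (idx : ℕ → Fin k) (dflt : D) :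
    ∀ (l : List (A × D)) (prev es : List D) (w' : DataPath A D) (σ σ' : Fin k → Option D),
    prev.length = es.length →
    (∀ i, i < es.length → σ (idx i) = some (es.getD i dflt)) →
    (∀ i j, i < prev.length + l.length → j < prev.length + l.length → idx i = idx j → i = j) →
    REMSat (mkREM idx prev l) w' σ σ' →
    w'.tail.map Prod.fst = l.map Prod.fst ∧
    (∀ i j, j < i → i < prev.length + l.length → prev.length ≤ i →
      ((prev ++ l.map Prod.snd).getD i dflt = (prev ++ l.map Prod.snd).getD j dflt ↔
       (es ++ w'.tail.map Prod.snd).getD i dflt = (es ++ w'.tail.map Prod.snd).getD j dflt)) := by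
  intro l
  induction l with
  | nil =>
    intro prev es w' σ σ' hlen hσ hinj hsat
    cases hsat with
    | eps d σ =>
      refine ⟨rfl, ?_⟩
      intro i j _ hi hi'
      simp only [List.length_nil] at hi
      omega
  | cons p rest ih =>
    obtain ⟨a, d⟩ := p
    intro prev es w' σ σ' hlen hσ hinj hsat
    set n := prev.length with hn
    simp only [mkREM] at hsat
    cases hsat with
    | concat hlv h₁ h₂ =>
      rename_i w₁ w₂ σ₁
      cases h₁ with
      | test h₁' hc =>
        cases h₁' with
        | letter =>
          rename_i d₁ d₂
          cases h₂ with
          | bind h₂' =>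
            -- hlv : w₁.lastVal = w₂.head, w₁ = ⟨d₁, [(a,d₂)]⟩
            have hd₂ : d₂ = w₂.head := by rw [← hlv, lastVal_single]
            rw [lastVal_single] at hc
            subst hd₂
            -- CondSat comparison facts
            have hcmp : ∀ i, i < prev.length →
                (prev.getD i dflt = d ↔ es.getD i dflt = w₂.head) := by
              rw [← cndAux_sat idx dflt d w₂.head σ prev es 0 hlen
                (by intro i hi; simpa using hσ i hi)]
              exact hc
            set σ₂ := updReg σ [idx n] w₂.head with hσ₂def
            have hσ₂ : ∀ i, i < (es ++ [w₂.head]).length →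
                σ₂ (idx i) = some ((es ++ [w₂.head]).getD i dflt) := by
              intro i hi
              simp only [List.length_append, List.length_singleton] at hi
              rcases Nat.lt_or_ge i n with hlt | hge
              · have hne : idx i ≠ idx n := fun he =>
                  absurd (hinj i n (by simp only [List.length_cons]; omega)
                    (by simp only [List.length_cons]; omega) he) (by omega)
                simp only [σ₂, updReg, List.mem_singleton, if_neg hne]
                rw [List.getD_append _ _ _ _ (by omega)]
                exact hσ i (by omega)
              · have hie : i = n := by omega
                subst hie
                simp only [σ₂, updReg, List.mem_singleton, if_pos rfl]
                rw [List.getD_append_right _ _ _ _ (by omega)]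
                simp [← hlen]
            have hinj' : ∀ i j, i < (prev ++ [d]).length + rest.length →
                j < (prev ++ [d]).length + rest.length → idx i = idx j → i = j := by
              intro i j hi hj he
              simp only [List.length_append, List.length_singleton] at hi hj
              exact hinj i j (by simp only [List.length_cons]; omega)
                (by simp only [List.length_cons]; omega) he
            obtain ⟨hlet, hmatch⟩ := ih (prev ++ [d]) (es ++ [w₂.head]) w₂ σ₂ σ'
              (by simp only [List.length_append, List.length_singleton]; omega) hσ₂ hinj' h₂'
            have hw'tail : (DataPath.comp ⟨d₁, [(a, w₂.head)]⟩ w₂).tail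
                = (a, w₂.head) :: w₂.tail := rfl
            constructor
            · rw [hw'tail]; simp only [List.map_cons, hlet]
            · intro i j hji hi hni
              rw [hw'tail]
              simp only [List.map_cons] at hi ⊢
              have hX : prev ++ d :: List.map Prod.snd rest
                  = prev ++ [d] ++ List.map Prod.snd rest := List.append_cons _ _ _
              have hY : es ++ w₂.head :: List.map Prod.snd w₂.tail
                  = es ++ [w₂.head] ++ List.map Prod.snd w₂.tail := List.append_cons _ _ _
              rw [hX, hY]
              rcases Nat.lt_or_ge n i with hni' | hni'
              · -- i ≥ n+1 : use hmatch
                have := hmatch i j hji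
                  (by simp only [List.length_append, List.length_singleton,
                    List.length_cons] at hi ⊢; omega)
                  (by simp only [List.length_append, List.length_singleton]; omega)
                exact this
              · -- i = n
                have hie : i = n := by omega
                subst hie
                have hXi : ((prev ++ [d]) ++ List.map Prod.snd rest).getD n dflt = d := by
                  rw [List.getD_append _ _ _ _ (by simp [hn]), List.getD_append_right _ _ _ _ (by omega)]
                  simp [hn]
                have hYi : ((es ++ [w₂.head]) ++ w₂.tail.map Prod.snd).getD n dflt = w₂.head := by
                  rw [List.getD_append _ _ _ _ (by simp [← hlen]),
                    List.getD_append_right _ _ _ _ (by omega)]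
                  simp [← hlen]
                have hXj : ((prev ++ [d]) ++ List.map Prod.snd rest).getD j dflt
                    = prev.getD j dflt := by
                  rw [List.getD_append _ _ _ _ (by simp; omega), List.getD_append _ _ _ _ (by omega)]
                have hYj : ((es ++ [w₂.head]) ++ w₂.tail.map Prod.snd).getD j dflt
                    = es.getD j dflt := by
                  rw [List.getD_append _ _ _ _ (by simp [← hlen]; omega),
                    List.getD_append _ _ _ _ (by omega)]
                rw [hXi, hYi, hXj, hYj]
                rw [eq_comm, (hcmp j (by omega)), eq_comm]

lemma orbitREM_self {A D : Type} {k : ℕ} (idx : ℕ → Fin k) (dflt : D) (w : DataPath A D)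
    (hinj : ∀ i j, i < w.tail.length + 1 → j < w.tail.length + 1 → idx i = idx j → i = j) :
    w ∈ REMLang (D := D) (orbitREM idx w) := by
  have hσ : ∀ i, i < ([w.head] : List D).length →
      (updReg (fun _ : Fin k => (none : Option D)) [idx 0] w.head) (idx i)
        = some (([w.head] : List D).getD i dflt) := by
    intro i hi
    simp only [List.length_singleton] at hi
    have : i = 0 := by omega
    subst this
    simp [updReg]
  obtain ⟨σ', hs⟩ := mkREM_complete idx dflt w.tail [w.head] w.head
    (updReg (fun _ => none) [idx 0] w.head) hσ
    (by
      intro i j hi hj he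
      simp only [List.length_singleton] at hi hj
      exact hinj i j (by omega) (by omega) he)
  exact ⟨σ', REMSat.bind hs⟩

lemma orbitREM_sound {A D : Type} {k : ℕ} [Countable D] [Infinite D]
    (idx : ℕ → Fin k) (dflt : D) (w w' : DataPath A D)
    (hinj : ∀ i j, i < w.tail.length + 1 → j < w.tail.length + 1 → idx i = idx j → i = j)
    (h : w' ∈ REMLang (D := D) (orbitREM idx w)) : ∃ π : D ≃ D, w.dmap ⇑π = w' := by
  obtain ⟨σ', hs⟩ := h
  simp only [orbitREM] at hs
  cases hs with
  | bind h' =>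
    have hσ : ∀ i, i < ([w'.head] : List D).length →
        (updReg (fun _ : Fin k => (none : Option D)) [idx 0] w'.head) (idx i)
          = some (([w'.head] : List D).getD i dflt) := by
      intro i hi
      simp only [List.length_singleton] at hi
      have : i = 0 := by omega
      subst this
      simp [updReg]
    obtain ⟨hlet, hmatch⟩ := mkREM_sound idx dflt w.tail [w.head] [w'.head] w'
      (updReg (fun _ => none) [idx 0] w'.head) σ' rfl hσ
      (by
        intro i j hi hj he
        simp only [List.length_singleton] at hi hj
        exact hinj i j (by omega) (by omega) he) h'
    set X := [w.head] ++ w.tail.map Prod.snd with hXdef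
    set Y := [w'.head] ++ w'.tail.map Prod.snd with hYdef
    have hlentail : w'.tail.length = w.tail.length := by
      have := congrArg List.length hlet; simpa using this
    set N := w.tail.length + 1 with hN
    have hfull : ∀ i j : Fin N, ((fun i : Fin N => X.getD i dflt) i = (fun i : Fin N => X.getD i dflt) j
        ↔ (fun i : Fin N => Y.getD i dflt) i = (fun i : Fin N => Y.getD i dflt) j) := by
      rintro ⟨i, hi⟩ ⟨j, hj⟩
      simp only
      rcases lt_trichotomy i j with hij | hij | hij
      · rw [eq_comm, hmatch j i hij (by simp only [List.length_singleton]; omega)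
          (by simp only [List.length_singleton]; omega), eq_comm]
      · subst hij; simp
      · exact hmatch i j hij (by simp only [List.length_singleton]; omega)
          (by simp only [List.length_singleton]; omega)
    obtain ⟨π, hπ⟩ := exists_perm_map _ _ hfull
    refine ⟨π, ?_⟩
    have hhead : π w.head = w'.head := by
      have := hπ ⟨0, by omega⟩
      simpa [hXdef, hYdef] using this
    have htail : w.tail.map (fun p => (p.1, π p.2)) = w'.tail := by
      apply List.ext_getElem (by simp [hlentail])
      intro m h₁ h₂
      simp only [List.length_map] at h₁
      have hm' : m < w'.tail.length := by omega
      have hfst : (w'.tail[m]).1 = (w.tail[m]).1 := by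
        have h3 : (List.map Prod.fst w'.tail)[m]'(by simpa) = (List.map Prod.fst w.tail)[m]'(by simpa) := by
          simp only [hlet]
        simpa using h3
      have hsnd : π ((w.tail[m]).2) = (w'.tail[m]).2 := by
        have h4 := hπ ⟨m + 1, by omega⟩
        simp only [hXdef, hYdef] at h4
        rw [List.getD_append_right _ _ _ _ (by simp), List.getD_append_right _ _ _ _ (by simp)] at h4
        simp only [List.length_singleton, Nat.add_sub_cancel] at h4
        rw [List.getD_eq_getElem _ _ (by simpa using h₁), List.getD_eq_getElem _ _ (by simpa using hm')] at h4
        simpa using h4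
      simp only [List.getElem_map]
      exact Prod.ext (by simp [hfst]) (by simp [hsnd])
    show DataPath.mk (π w.head) (w.tail.map (fun p => (p.1, π p.2))) = w'
    rw [hhead, htail]

def bigPlusREM {A : Type} {k : ℕ} : List (REM A k) → REM A k
  | [] => .test .eps (.conj .top (.neg .top))
  | e :: es => .plus e (bigPlusREM es)

lemma bigPlus_mem {A D : Type} {k : ℕ} (es : List (REM A k)) (w : DataPath A D) :
    w ∈ REMLang (D := D) (bigPlusREM es) ↔ ∃ e ∈ es, w ∈ REMLang (D := D) e := by
  induction es with
  | nil =>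
    constructor
    · rintro ⟨σ', hs⟩
      cases hs with
      | test h hc =>
        obtain ⟨h1, h2⟩ := hc
        exact absurd trivial h2
    · rintro ⟨e, he, -⟩
      exact absurd he List.not_mem_nil
  | cons e es ih =>
    constructor
    · rintro ⟨σ', hs⟩
      cases hs with
      | plusL h => exact ⟨e, List.mem_cons_self, σ', h⟩
      | plusR h =>
        obtain ⟨e', he', hw⟩ := ih.mp ⟨σ', h⟩
        exact ⟨e', List.mem_cons_of_mem e he', hw⟩
    · rintro ⟨e', he', hw⟩
      rcases List.mem_cons.mp he' with rfl | he'
      · obtain ⟨σ', h⟩ := hw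
        exact ⟨σ', REMSat.plusL h⟩
      · obtain ⟨σ', h⟩ := ih.mpr ⟨e', he', hw⟩
        exact ⟨σ', REMSat.plusR h⟩


/-- `S` is REM-definable on `G` iff every pair `(u,v) ∈ S` is
connected by a data path `w` all of whose automorphic images only connect
pairs belonging to `S`. -/
theorem rem_definable_iff_automorphism_condition {V A D : Type}
    [Fintype V] [Fintype A] [Countable D] [Infinite D]
    (G : DataGraph V A D) (S : Set (V × V)) :
    (∃ (k : ℕ) (e : REM A k),
        S = {p : V × V | ∃ w : DataPath A D, w ∈ REMLang e ∧ Connects G p.1 w p.2}) ↔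
    (∀ p ∈ S, ∃ w : DataPath A D, Connects G p.1 w p.2 ∧
        ∀ (π : D ≃ D) (u' v' : V),
          Connects G u' (DataPath.dmap (⇑π) w) v' → (u', v') ∈ S) := by
  constructor
  · rintro ⟨k, e, rfl⟩ p hp
    obtain ⟨w, hw, hconn⟩ := hp
    refine ⟨w, hconn, ?_⟩
    intro π u' v' hc
    exact ⟨w.dmap ⇑π, remLang_dmap π hw, hc⟩
  · intro H
    classical
    haveI : Nonempty D := inferInstance
    set dflt : D := Classical.arbitrary D with hdflt
    choose wfn hconn hcl using H
    set K : ℕ := 1 + Finset.univ.sup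
      (fun p : V × V => if h : p ∈ S then (wfn p h).tail.length else 0) with hK
    have hKpos : 0 < K := by omega
    have hbound : ∀ p (hp : p ∈ S), (wfn p hp).tail.length + 1 ≤ K := by
      intro p hp
      have h1 : (fun p : V × V => if h : p ∈ S then (wfn p h).tail.length else 0) p
          ≤ Finset.univ.sup (fun p : V × V => if h : p ∈ S then (wfn p h).tail.length else 0) :=
        Finset.le_sup (f := fun p : V × V => if h : p ∈ S then (wfn p h).tail.length else 0)
          (Finset.mem_univ p)
      simp only [dif_pos hp] at h1
      omega
    set idx : ℕ → Fin K := fun j => ⟨j % K, Nat.mod_lt _ hKpos⟩ with hidxdef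
    have hidx : ∀ n, n ≤ K → ∀ i j, i < n → j < n → idx i = idx j → i = j := by
      intro n hn i j hi hj he
      have : i % K = j % K := congrArg Fin.val he
      rwa [Nat.mod_eq_of_lt (by omega), Nat.mod_eq_of_lt (by omega)] at this
    set F : Finset (V × V) := (Set.toFinite S).toFinset with hF
    have hFmem : ∀ p, p ∈ F ↔ p ∈ S := fun p => Set.Finite.mem_toFinset _
    set L : List (REM A K) :=
      F.attach.toList.map (fun q => orbitREM idx (wfn q.1 ((hFmem q.1).mp q.2))) with hL
    refine ⟨K, bigPlusREM L, ?_⟩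
    ext p
    constructor
    · intro hp
      have hq : p ∈ F := (hFmem p).mpr hp
      have hmem : orbitREM idx (wfn p hp) ∈ L := by
        rw [hL]
        apply List.mem_map.mpr
        exact ⟨⟨p, hq⟩, by simp [Finset.mem_toList], rfl⟩
      have hself : wfn p hp ∈ REMLang (D := D) (orbitREM idx (wfn p hp)) :=
        orbitREM_self idx dflt (wfn p hp)
          (hidx _ (hbound p hp))
      exact ⟨wfn p hp, (bigPlus_mem L _).mpr ⟨_, hmem, hself⟩, hconn p hp⟩
    · rintro ⟨w', hw', hc'⟩
      obtain ⟨e', he', hwe⟩ := (bigPlus_mem L w').mp hw'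
      rw [hL] at he'
      obtain ⟨q, hq, rfl⟩ := List.mem_map.mp he'
      obtain ⟨π, hπ⟩ := orbitREM_sound idx dflt _ w'
        (hidx _ (hbound q.1 ((hFmem q.1).mp q.2))) hwe
      have := hcl q.1 ((hFmem q.1).mp q.2) π p.1 p.2 (by rw [hπ]; exact hc')
      exact this
end

section
/- Let G be a data graph with n nodes and let B be a set of binary relations on the nodes of G. Every relation in the closure of B under union (+) and composition (∘) is a union T₁ + T₂ + … + T_m with m ≤ n², where each T_j is a composition R₁ ∘ R₂ ∘ … ∘ R_p of relations R_k ∈ B with p ≤ 2^{n²}. -/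
section NFHelpers

variable {V : Type}

/-- Product (composition) of a list of relations. -/
def prodL (T : List (Set (V × V))) : Set (V × V) := T.foldr relComp (relId V)

/-- Union of a list of relations. -/
def bigU (L : List (Set (V × V))) : Set (V × V) := L.foldr (· ∪ ·) ∅

lemma mem_bigU {L : List (Set (V × V))} {x : V × V} :
    x ∈ bigU L ↔ ∃ T ∈ L, x ∈ T := by
  induction L with
  | nil => simp [bigU]
  | cons T L ih =>
    simp only [bigU, List.foldr_cons] at ih ⊢
    rw [Set.mem_union, ih]; simp

lemma relComp_assoc (a b c : Set (V × V)) :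
    relComp (relComp a b) c = relComp a (relComp b c) := by
  ext p; simp only [relComp, Set.mem_setOf_eq]
  constructor
  · rintro ⟨z, ⟨y, h1, h2⟩, h3⟩; exact ⟨y, h1, z, h2, h3⟩
  · rintro ⟨y, h1, z, h2, h3⟩; exact ⟨z, ⟨y, h1, h2⟩, h3⟩

lemma relId_comp (s : Set (V × V)) : relComp (relId V) s = s := by
  ext p; simp [relComp, relId]

lemma comp_relId (s : Set (V × V)) : relComp s (relId V) = s := by
  ext p; simp [relComp, relId]

lemma prodL_append (T₁ T₂ : List (Set (V × V))) :
    prodL (T₁ ++ T₂) = relComp (prodL T₁) (prodL T₂) := by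
  induction T₁ with
  | nil => simp [prodL, relId_comp]
  | cons R T ih =>
    simp only [List.cons_append, prodL, List.foldr_cons] at ih ⊢
    rw [ih, relComp_assoc]

lemma bigU_append (l₁ l₂ : List (Set (V × V))) :
    bigU (l₁ ++ l₂) = bigU l₁ ∪ bigU l₂ := by
  induction l₁ with
  | nil => simp [bigU]
  | cons T l ih =>
    simp only [List.cons_append, bigU, List.foldr_cons] at ih ⊢
    rw [ih, Set.union_assoc]

lemma shrink_comp [Fintype V] (c : ℕ) (hc : Fintype.card (Set (V × V)) ≤ c) :
    ∀ (m : ℕ) (T : List (Set (V × V))), T.length ≤ m → T ≠ [] →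
    ∃ T', T' ≠ [] ∧ T'.length ≤ c ∧ (∀ R ∈ T', R ∈ T) ∧ prodL T' = prodL T := by
  classical
  intro m
  induction m with
  | zero =>
    intro T h hne
    cases T with
    | nil => exact absurd rfl hne
    | cons a t => simp at h
  | succ m ih =>
    intro T hlen hne
    by_cases hle : T.length ≤ c
    · exact ⟨T, hne, hle, fun R hR => hR, rfl⟩
    · push_neg at hle
      have hcard : Fintype.card (Set (V × V)) < Fintype.card (Fin T.length) := by
        simpa using lt_of_le_of_lt hc hle
      obtain ⟨i, j, hij, hfe⟩ :=
        Fintype.exists_ne_map_eq_of_card_lt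
          (fun i : Fin T.length => prodL (T.take (i.1 + 1))) hcard
      have key : ∀ i j : ℕ, i < j → j < T.length →
          prodL (T.take (i + 1)) = prodL (T.take (j + 1)) →
          ∃ T', T' ≠ [] ∧ T'.length ≤ c ∧ (∀ R ∈ T', R ∈ T) ∧
            prodL T' = prodL T := by
        intro i j hlt hj hfe
        have hfold : prodL (T.take (i + 1) ++ T.drop (j + 1)) = prodL T := by
          have h1 : T = T.take (j + 1) ++ T.drop (j + 1) :=
            (List.take_append_drop _ _).symm
          rw [prodL_append, hfe, ← prodL_append]
          conv_rhs => rw [h1]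
        have hlen'' : (T.take (i + 1) ++ T.drop (j + 1)).length ≤ m := by
          simp only [List.length_append, List.length_take, List.length_drop]
          omega
        have hne'' : T.take (i + 1) ++ T.drop (j + 1) ≠ [] := by
          apply List.ne_nil_of_length_pos
          simp only [List.length_append, List.length_take, List.length_drop]
          omega
        obtain ⟨T', h1, h2, h3, h4⟩ := ih _ hlen'' hne''
        refine ⟨T', h1, h2, ?_, h4.trans hfold⟩
        intro R hR
        rcases List.mem_append.mp (h3 R hR) with h | h
        exacts [List.mem_of_mem_take h, List.mem_of_mem_drop h]
      rcases lt_trichotomy i.1 j.1 with h | h | h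
      · exact key i.1 j.1 h j.isLt hfe
      · exact absurd (Fin.ext h) hij
      · exact key j.1 i.1 h i.isLt hfe.symm

lemma shrink_list [Fintype V] (c : ℕ) (hc : Fintype.card (Set (V × V)) ≤ c) :
    ∀ L : List (List (Set (V × V))), (∀ T ∈ L, T ≠ []) →
    ∃ L' : List (List (Set (V × V))), L'.map prodL = L.map prodL ∧
      ∀ T' ∈ L', T' ≠ [] ∧ T'.length ≤ c ∧ ∃ T ∈ L, ∀ R ∈ T', R ∈ T := by
  intro L
  induction L with
  | nil => exact fun _ => ⟨[], rfl, by simp⟩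
  | cons T L ih =>
    intro h
    obtain ⟨L', hL1, hL2⟩ := ih (fun T hT => h T (List.mem_cons_of_mem _ hT))
    obtain ⟨T', h1, h2, h3, h4⟩ :=
      shrink_comp c hc T.length T le_rfl (h T (List.mem_cons_self))
    refine ⟨T' :: L', by simp [hL1, h4], ?_⟩
    intro X hX
    rcases List.mem_cons.mp hX with rfl | hX
    · exact ⟨h1, h2, T, List.mem_cons_self, h3⟩
    · obtain ⟨a, b, T0, hT0, h5⟩ := hL2 X hX
      exact ⟨a, b, T0, List.mem_cons_of_mem _ hT0, h5⟩

lemma shrink_union [Fintype V] [Nonempty V] (c : ℕ)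
    (hc : Fintype.card (V × V) ≤ c)
    (L : List (List (Set (V × V)))) (hne : L ≠ []) :
    ∃ L', L' ≠ [] ∧ L'.length ≤ c ∧ (∀ T ∈ L', T ∈ L) ∧
      bigU (L'.map prodL) = bigU (L.map prodL) := by
  classical
  set S := bigU (L.map prodL) with hS
  have hsub : ∀ T ∈ L, prodL T ⊆ S := fun T hT x hx =>
    mem_bigU.mpr ⟨prodL T, List.mem_map_of_mem hT, hx⟩
  by_cases hSe : S = ∅
  · obtain ⟨T, L0, rfl⟩ := List.exists_cons_of_ne_nil hne
    have hc1 : 1 ≤ c := le_trans Fintype.card_pos hc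
    have hTe : prodL T = ∅ :=
      Set.subset_empty_iff.mp (hSe ▸ hsub T (List.mem_cons_self))
    refine ⟨[T], by simp, by simpa using hc1, by simp, ?_⟩
    simp [bigU, hTe, ← hSe]
  · have hSne : S.Nonempty := Set.nonempty_iff_ne_empty.mpr hSe
    have hch : ∀ x ∈ S, ∃ T, T ∈ L ∧ x ∈ prodL T := by
      intro x hx
      obtain ⟨P, hP, hxP⟩ := mem_bigU.mp hx
      obtain ⟨T, hT, rfl⟩ := List.mem_map.mp hP
      exact ⟨T, hT, hxP⟩
    let g : V × V → List (Set (V × V)) := fun x =>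
      if h : x ∈ S then (hch x h).choose else []
    have hg1 : ∀ x ∈ S, g x ∈ L ∧ x ∈ prodL (g x) := by
      intro x hx; simp only [g, dif_pos hx]; exact (hch x hx).choose_spec
    refine ⟨(S.toFinset.image g).toList, ?_, ?_, ?_, ?_⟩
    · have hF : (S.toFinset.image g).Nonempty :=
        Finset.Nonempty.image (Set.toFinset_nonempty.mpr hSne) _
      simpa [Finset.toList_eq_nil] using Finset.nonempty_iff_ne_empty.mp hF
    · calc (S.toFinset.image g).toList.length = (S.toFinset.image g).card :=
          Finset.length_toList _
        _ ≤ S.toFinset.card := Finset.card_image_le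
        _ ≤ Fintype.card (V × V) := Finset.card_le_univ _
        _ ≤ c := hc
    · intro T hT
      rw [Finset.mem_toList] at hT
      obtain ⟨x, hx, rfl⟩ := Finset.mem_image.mp hT
      exact (hg1 x (Set.mem_toFinset.mp hx)).1
    · ext x
      constructor
      · intro hx
        obtain ⟨P, hP, hxP⟩ := mem_bigU.mp hx
        obtain ⟨T, hT, rfl⟩ := List.mem_map.mp hP
        rw [Finset.mem_toList] at hT
        obtain ⟨y, hy, rfl⟩ := Finset.mem_image.mp hT
        exact hsub _ (hg1 y (Set.mem_toFinset.mp hy)).1 hxP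
      · intro hx
        refine mem_bigU.mpr ⟨prodL (g x), List.mem_map_of_mem ?_, (hg1 x hx).2⟩
        rw [Finset.mem_toList]
        exact Finset.mem_image_of_mem g (Set.mem_toFinset.mpr hx)

end NFHelpers

theorem closure_normal_form_aux {V : Type}
    [Fintype V] [Nonempty V]
    (n : ℕ) (hn : Fintype.card V = n)
    (B : Set (Set (V × V))) (S : Set (V × V)) (h : InClosure B S) :
    ∃ L : List (List (Set (V × V))),
      L ≠ [] ∧ L.length ≤ n ^ 2 ∧
      (∀ T ∈ L, T ≠ [] ∧ T.length ≤ 2 ^ (n ^ 2) ∧ ∀ R ∈ T, R ∈ B) ∧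
      S = bigU (L.map prodL) := by
  classical
  have hn1 : 1 ≤ n := hn ▸ Fintype.card_pos
  have hcV : Fintype.card (V × V) = n ^ 2 := by
    rw [Fintype.card_prod, hn, sq]
  have hcS : Fintype.card (Set (V × V)) = 2 ^ (n ^ 2) := by
    rw [Fintype.card_set, hcV]
  induction h with
  | @base S0 hS0 =>
    have h1 : 1 ≤ n ^ 2 := Nat.one_le_pow 2 n (by omega)
    refine ⟨[[S0]], by simp, by simpa using h1, ?_, ?_⟩
    · intro T hT
      simp only [List.mem_singleton] at hT
      subst hT
      exact ⟨by simp, by simpa using Nat.one_le_two_pow, by simpa using hS0⟩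
    · simp [bigU, prodL, comp_relId]
  | @union S₁ S₂ h1 h2 ih1 ih2 =>
    obtain ⟨L1, hL1ne, _, hL1T, hS1⟩ := ih1
    obtain ⟨L2, hL2ne, _, hL2T, hS2⟩ := ih2
    have hne12 : L1 ++ L2 ≠ [] := fun h0 => hL1ne (List.append_eq_nil_iff.mp h0).1
    obtain ⟨L', ha, hb, cmem, hd⟩ :=
      shrink_union (n ^ 2) (le_of_eq hcV) (L1 ++ L2) hne12
    refine ⟨L', ha, hb, ?_, ?_⟩
    · intro T hT
      rcases List.mem_append.mp (cmem T hT) with h | h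
      exacts [hL1T T h, hL2T T h]
    · rw [hd, List.map_append, bigU_append, ← hS1, ← hS2]
  | @comp S₁ S₂ h1 h2 ih1 ih2 =>
    obtain ⟨L1, hL1ne, _, hL1T, hS1⟩ := ih1
    obtain ⟨L2, hL2ne, _, hL2T, hS2⟩ := ih2
    set L12 := L1.flatMap (fun T₁ => L2.map (fun T₂ => T₁ ++ T₂)) with hL12
    have hmem12 : ∀ T ∈ L12, ∃ T₁ ∈ L1, ∃ T₂ ∈ L2, T = T₁ ++ T₂ := by
      intro T hT
      simp only [hL12, List.mem_flatMap, List.mem_map] at hT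
      obtain ⟨T₁, h₁, T₂, h₂, rfl⟩ := hT
      exact ⟨T₁, h₁, T₂, h₂, rfl⟩
    have hval : relComp S₁ S₂ = bigU (L12.map prodL) := by
      ext x
      constructor
      · rintro ⟨z, hz1, hz2⟩
        rw [hS1] at hz1; rw [hS2] at hz2
        obtain ⟨P1, hP1, hx1⟩ := mem_bigU.mp hz1
        obtain ⟨T₁, hT₁, rfl⟩ := List.mem_map.mp hP1
        obtain ⟨P2, hP2, hx2⟩ := mem_bigU.mp hz2
        obtain ⟨T₂, hT₂, rfl⟩ := List.mem_map.mp hP2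
        refine mem_bigU.mpr ⟨prodL (T₁ ++ T₂),
          List.mem_map_of_mem ?_, ?_⟩
        · exact List.mem_flatMap.mpr ⟨T₁, hT₁, List.mem_map_of_mem hT₂⟩
        · rw [prodL_append]; exact ⟨z, hx1, hx2⟩
      · intro hx
        obtain ⟨P, hP, hxP⟩ := mem_bigU.mp hx
        obtain ⟨T, hT, rfl⟩ := List.mem_map.mp hP
        obtain ⟨T₁, hT₁, T₂, hT₂, rfl⟩ := hmem12 T hT
        rw [prodL_append] at hxP
        obtain ⟨z, hz1, hz2⟩ := hxP
        refine ⟨z, ?_, ?_⟩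
        · rw [hS1]
          exact mem_bigU.mpr ⟨prodL T₁, List.mem_map_of_mem hT₁, hz1⟩
        · rw [hS2]
          exact mem_bigU.mpr ⟨prodL T₂, List.mem_map_of_mem hT₂, hz2⟩
    have hne12T : ∀ T ∈ L12, T ≠ [] := by
      intro T hT
      obtain ⟨T₁, h₁, T₂, h₂, rfl⟩ := hmem12 T hT
      intro h0
      exact (hL1T T₁ h₁).1 (List.append_eq_nil_iff.mp h0).1
    obtain ⟨L12', hmap, hT'⟩ := shrink_list (2 ^ (n ^ 2)) (le_of_eq hcS) L12 hne12T
    have hL12ne : L12 ≠ [] := by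
      obtain ⟨a1, t1, rfl⟩ := List.exists_cons_of_ne_nil hL1ne
      obtain ⟨a2, t2, rfl⟩ := List.exists_cons_of_ne_nil hL2ne
      exact List.ne_nil_of_mem
        (List.mem_flatMap.mpr ⟨a1, List.mem_cons_self,
          List.mem_map_of_mem (List.mem_cons_self)⟩)
    have hne' : L12' ≠ [] := by
      intro h0
      apply hL12ne
      have := congrArg List.length hmap
      simp only [h0, List.length_map, List.length_nil] at this
      exact List.eq_nil_of_length_eq_zero this.symm
    obtain ⟨L', ha, hb, cmem, hd⟩ :=
      shrink_union (n ^ 2) (le_of_eq hcV) L12' hne'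
    refine ⟨L', ha, hb, ?_, ?_⟩
    · intro T hT
      obtain ⟨t1, t2, T0, hT0, hsub⟩ := hT' T (cmem T hT)
      refine ⟨t1, t2, ?_⟩
      intro R hR
      obtain ⟨T₁, h₁, T₂, h₂, rfl⟩ := hmem12 T0 hT0
      rcases List.mem_append.mp (hsub R hR) with h | h
      exacts [(hL1T T₁ h₁).2.2 R h, (hL2T T₂ h₂).2.2 R h]
    · rw [hval, ← hmap, ← hd]

/-- every relation in the closure of `B` under union and composition
is a union of at most `n²` compositions, each of at most `2^{n²}` relations of `B`
(`n` the number of nodes of the data graph). -/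
theorem closure_normal_form {V A D : Type}
    [Fintype V] [Nonempty V] [Fintype A] [Countable D] [Infinite D]
    (G : DataGraph V A D) (n : ℕ) (hn : Fintype.card V = n)
    (B : Set (Set (V × V))) (S : Set (V × V)) (h : InClosure B S) :
    ∃ L : List (List (Set (V × V))),
      L ≠ [] ∧ L.length ≤ n ^ 2 ∧
      (∀ T ∈ L, T ≠ [] ∧ T.length ≤ 2 ^ (n ^ 2) ∧ ∀ R ∈ T, R ∈ B) ∧
      S = (L.map (fun T => T.foldr relComp (relId V))).foldr (· ∪ ·) (∅ : Set (V × V)) := by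
  obtain ⟨L, a, b, c, d⟩ := closure_normal_form_aux n hn B S h
  exact ⟨L, a, b, c, d⟩
end

section
/- Let G = (V, E, ρ) be a data graph, h : V → V a data graph homomorphism, and w a data path connecting node p to node q in G. Then there exists a data path w′ automorphic to w that connects h(p) to h(q) in G. -/
/-- Auxiliary: a path recorded by its visited nodes. -/
inductive NodePath {V A D : Type} (G : DataGraph V A D) : V → List (A × V) → V → Prop
  | nil (u : V) : NodePath G u [] u
  | cons {u v x : V} {a : A} {t : List (A × V)} :
      (u, a, v) ∈ G.E → NodePath G v t x → NodePath G u ((a, v) :: t) x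

lemma nodePath_connects {V A D : Type} {G : DataGraph V A D} {u v : V}
    {l : List (A × V)} (hl : NodePath G u l v) :
    Connects G u ⟨G.ρ u, l.map (fun c => (c.1, G.ρ c.2))⟩ v := by
  induction hl with
  | nil u => exact .nil u
  | cons he _ ih => exact .cons he ih

lemma connects_nodePath {V A D : Type} {G : DataGraph V A D} {u v : V}
    {w : DataPath A D} (hw : Connects G u w v) :
    ∃ l : List (A × V), NodePath G u l v ∧
      w = ⟨G.ρ u, l.map (fun c => (c.1, G.ρ c.2))⟩ := by
  induction hw with
  | nil u => exact ⟨[], .nil u, rfl⟩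
  | @cons u v x a t he _ ih =>
    obtain ⟨l, hl, hweq⟩ := ih
    refine ⟨(a, v) :: l, .cons he hl, ?_⟩
    simp only [List.map_cons]
    have := congrArg DataPath.tail hweq
    simp only at this
    rw [this]

lemma connects_head_eq {V A D : Type} {G : DataGraph V A D} {u v : V}
    {w : DataPath A D} (hw : Connects G u w v) : w = ⟨G.ρ u, w.tail⟩ := by
  cases hw <;> rfl

lemma reach_cons {V A D : Type} {G : DataGraph V A D} {u v m : V} {a : A}
    (he : (u, a, v) ∈ G.E) (hr : Reachable G v m) : Reachable G u m := by
  obtain ⟨w, hw⟩ := hr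
  rw [connects_head_eq hw] at hw
  exact ⟨⟨G.ρ u, (a, G.ρ v) :: w.tail⟩, .cons he hw⟩

lemma nodePath_reach {V A D : Type} {G : DataGraph V A D} {u v : V}
    {l : List (A × V)} (hl : NodePath G u l v) :
    ∀ m ∈ u :: l.map Prod.snd, Reachable G u m := by
  induction hl with
  | nil u =>
    intro m hm
    simp only [List.map_nil, List.mem_singleton] at hm
    subst hm
    exact ⟨⟨G.ρ m, []⟩, .nil m⟩
  | @cons u v x a t he _ ih =>
    intro m hm
    simp only [List.map_cons, List.mem_cons] at hm
    rcases hm with rfl | hm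
    · exact ⟨⟨G.ρ m, []⟩, .nil m⟩
    · exact reach_cons he (ih m (by simpa using hm))

lemma nodePath_comparable {V A D : Type} {G : DataGraph V A D} {u v : V}
    {l : List (A × V)} (hl : NodePath G u l v) :
    ∀ n ∈ u :: l.map Prod.snd, ∀ m ∈ u :: l.map Prod.snd,
      Reachable G n m ∨ Reachable G m n := by
  induction hl with
  | nil u =>
    intro n hn m hm
    simp only [List.map_nil, List.mem_singleton] at hn hm
    subst hn; subst hm
    exact Or.inl ⟨_, Connects.nil _⟩
  | @cons u v x a t he ht ih =>
    intro n hn m hm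
    simp only [List.map_cons, List.mem_cons] at hn hm
    rcases hn with rfl | hn
    · rcases hm with rfl | hm
      · exact Or.inl ⟨_, Connects.nil _⟩
      · exact Or.inl (reach_cons he (nodePath_reach ht m (by simpa using hm)))
    · rcases hm with rfl | hm
      · exact Or.inr (reach_cons he (nodePath_reach ht n (by simpa using hn)))
      · exact ih n (by simpa using hn) m (by simpa using hm)

lemma nodePath_map_hom {V A D : Type} {G : DataGraph V A D} {h : V → V}
    (hh : IsDGHom G h) {u v : V} {l : List (A × V)} (hl : NodePath G u l v) :
    NodePath G (h u) (l.map fun c => (c.1, h c.2)) (h v) := by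
  induction hl with
  | nil u => exact .nil (h u)
  | cons he _ ih => exact .cons (hh.1 _ _ _ he) ih

/-- Any finite consistent partial injection extends to a permutation. -/
lemma extend_pairs {D : Type} :
    ∀ L : List (D × D), (∀ a ∈ L, ∀ b ∈ L, a.1 = b.1 ↔ a.2 = b.2) →
      ∃ π : D ≃ D, ∀ a ∈ L, π a.1 = a.2 := by
  classical
  intro L
  induction L with
  | nil => exact fun _ => ⟨Equiv.refl D, by simp⟩
  | cons xy L ih =>
    intro hg
    obtain ⟨x, y⟩ := xy
    obtain ⟨π, hπ⟩ := ih (fun a ha b hb =>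
      hg a (List.mem_cons_of_mem _ ha) b (List.mem_cons_of_mem _ hb))
    by_cases hx : ∃ a ∈ L, a.1 = x
    · obtain ⟨a, ha, hax⟩ := hx
      have hy : y = a.2 :=
        (hg (x, y) (List.mem_cons_self) a (List.mem_cons_of_mem _ ha)).mp hax.symm
      refine ⟨π, ?_⟩
      intro b hb
      rcases List.mem_cons.mp hb with rfl | hb
      · simpa [hy, ← hax] using hπ a ha
      · exact hπ b hb
    · refine ⟨π.trans (Equiv.swap (π x) y), ?_⟩
      intro b hb
      rcases List.mem_cons.mp hb with rfl | hb
      · simp [Equiv.swap_apply_left]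
      · have h1 : π b.1 = b.2 := hπ b hb
        have hne1 : b.2 ≠ π x := by
          intro hEq
          exact hx ⟨b, hb, π.injective (h1.trans hEq)⟩
        have hne2 : b.2 ≠ y := by
          intro hEq
          exact hx ⟨b, hb,
            ((hg (x, y) (List.mem_cons_self) b (List.mem_cons_of_mem _ hb)).mpr
              hEq.symm).symm⟩
        simp [h1, Equiv.swap_apply_of_ne_of_ne hne1 hne2]

/-- a data graph homomorphism maps connecting data paths to
automorphic connecting data paths: if `w` connects `p` to `q`, some automorphic
image of `w` connects `h p` to `h q`. -/
theorem hom_preserves_paths_up_to_automorphism {V A D : Type}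
    [Fintype V] [Fintype A] [Countable D] [Infinite D]
    (G : DataGraph V A D) (h : V → V) (hh : IsDGHom G h)
    (p q : V) (w : DataPath A D) (hw : Connects G p w q) :
    ∃ π : D ≃ D, Connects G (h p) (DataPath.dmap (⇑π) w) (h q) := by
  obtain ⟨l, hl, rfl⟩ := connects_nodePath hw
  -- pairs (ρ n, ρ (h n)) for nodes n on the path
  set ns : List V := p :: l.map Prod.snd with hns
  have hcons : ∀ a ∈ ns.map (fun n => (G.ρ n, G.ρ (h n))),
      ∀ b ∈ ns.map (fun n => (G.ρ n, G.ρ (h n))), a.1 = b.1 ↔ a.2 = b.2 := by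
    intro a ha b hb
    obtain ⟨n, hn, rfl⟩ := List.mem_map.mp ha
    obtain ⟨m, hm, rfl⟩ := List.mem_map.mp hb
    rcases nodePath_comparable hl n hn m hm with hr | hr
    · exact hh.2 n m hr
    · exact ⟨fun e => ((hh.2 m n hr).mp e.symm).symm,
        fun e => ((hh.2 m n hr).mpr e.symm).symm⟩
  obtain ⟨π, hπ⟩ := extend_pairs _ hcons
  have hπ' : ∀ n ∈ ns, π (G.ρ n) = G.ρ (h n) := fun n hn =>
    hπ (G.ρ n, G.ρ (h n)) (List.mem_map.mpr ⟨n, hn, rfl⟩)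
  refine ⟨π, ?_⟩
  have hconn := nodePath_connects (nodePath_map_hom hh hl)
  have heq : (DataPath.dmap (⇑π) ⟨G.ρ p, l.map (fun c => (c.1, G.ρ c.2))⟩ :
      DataPath A D) =
      ⟨G.ρ (h p), (l.map fun c => (c.1, h c.2)).map (fun c => (c.1, G.ρ c.2))⟩ := by
    unfold DataPath.dmap
    simp only [List.map_map]
    refine congrArg₂ DataPath.mk ?_ ?_
    · exact hπ' p (List.mem_cons_self)
    · refine List.map_congr_left ?_
      intro c hc
      simp only [Function.comp]
      exact congrArg _ (hπ' c.2 (List.mem_cons_of_mem _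
        (List.mem_map.mpr ⟨c, hc, rfl⟩)))
  rw [heq]
  exact hconn
end

section
/- Let G = (V, E, ρ) be a data graph and S a set of tuples of nodes of G of a fixed arity. Then S is UCRDPQ-definable if and only if for every data graph homomorphism h of G and every tuple p̄ ∈ S, the tuple h(p̄) (obtained by applying h componentwise) also belongs to S. -/
section Aux
variable {V A D : Type}

lemma lastVal_cons (d : D) (p : A × D) (t : List (A × D)) :
    DataPath.lastVal (⟨d, p :: t⟩ : DataPath A D) = DataPath.lastVal ⟨p.2, t⟩ := by
  induction t generalizing p with
  | nil => simp [DataPath.lastVal]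
  | cons q t ih =>
    simp only [DataPath.lastVal] at *
    cases hx : (q :: t).getLast? with
    | none => simp at hx
    | some x => simp [hx]

lemma lastVal_single_s19 (d₁ d₂ : D) (a : A) :
    DataPath.lastVal (⟨d₁, [(a, d₂)]⟩ : DataPath A D) = d₂ := by
  simp [DataPath.lastVal]

lemma connects_head {G : DataGraph V A D} {u v : V} {w : DataPath A D}
    (h : Connects G u w v) : w.head = G.ρ u := by
  cases h <;> rfl

lemma connects_lastVal {G : DataGraph V A D} {u v : V} {w : DataPath A D}
    (h : Connects G u w v) : w.lastVal = G.ρ v := by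
  induction h with
  | nil => rfl
  | cons he hc ih => rw [lastVal_cons]; exact ih

lemma connects_comp {G : DataGraph V A D} {u z v : V} {w₁ w₂ : DataPath A D}
    (h₁ : Connects G u w₁ z) (h₂ : Connects G z w₂ v) :
    Connects G u (w₁.comp w₂) v := by
  induction h₁ with
  | nil u =>
    have hh := connects_head h₂
    have : w₂ = ⟨G.ρ u, w₂.tail⟩ := by cases w₂; simp_all
    rw [this] at h₂
    exact h₂
  | cons he hc ih =>
    exact Connects.cons he (ih h₂)

lemma connects_split {G : DataGraph V A D} {u v : V} {t₁ t₂ : List (A × D)}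
    (h : Connects G u ⟨G.ρ u, t₁ ++ t₂⟩ v) :
    ∃ z, Connects G u ⟨G.ρ u, t₁⟩ z ∧ Connects G z ⟨G.ρ z, t₂⟩ v := by
  induction t₁ generalizing u with
  | nil => exact ⟨u, Connects.nil u, h⟩
  | cons p t₁ ih =>
    cases h with
    | cons he hc =>
      obtain ⟨z, hz1, hz2⟩ := ih hc
      exact ⟨z, Connects.cons he hz1, hz2⟩

lemma reachable_refl (G : DataGraph V A D) (u : V) : Reachable G u u :=
  ⟨_, Connects.nil u⟩

lemma reachable_trans {G : DataGraph V A D} {u z v : V}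
    (h₁ : Reachable G u z) (h₂ : Reachable G z v) : Reachable G u v := by
  obtain ⟨w₁, h₁⟩ := h₁; obtain ⟨w₂, h₂⟩ := h₂
  exact ⟨_, connects_comp h₁ h₂⟩

lemma hom_connects {G : DataGraph V A D} {h : V → V} (hh : IsDGHom G h)
    {u v : V} {w : DataPath A D} (hc : Connects G u w v) :
    ∃ w', Connects G (h u) w' (h v) := by
  induction hc with
  | nil u => exact ⟨_, Connects.nil (h u)⟩
  | cons he hc ih =>
    obtain ⟨w', hw'⟩ := ih
    have hhead := connects_head hw'
    refine ⟨⟨_, _ :: w'.tail⟩, Connects.cons (hh.1 _ _ _ he) ?_⟩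
    rw [← hhead]; exact hw'
  
lemma hom_reachable {G : DataGraph V A D} {h : V → V} (hh : IsDGHom G h)
    {u v : V} (hr : Reachable G u v) : Reachable G (h u) (h v) := by
  obtain ⟨w, hw⟩ := hr
  obtain ⟨w', hw'⟩ := hom_connects hh hw
  exact ⟨w', hw'⟩

end Aux


section Sim
variable {V A D : Type}

/-- Register correspondence relative to a current node `u`. -/
def RegRel {k : ℕ} (G : DataGraph V A D) (h : V → V) (u : V)
    (σ τ : Fin k → Option D) : Prop :=
  ∀ i, (σ i = none ∧ τ i = none) ∨
    ∃ p, Reachable G p u ∧ σ i = some (G.ρ p) ∧ τ i = some (G.ρ (h p))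

lemma RegRel.mono {k : ℕ} {G : DataGraph V A D} {h : V → V} {u v : V}
    {σ τ : Fin k → Option D} (hr : Reachable G u v) (hrel : RegRel G h u σ τ) :
    RegRel G h v σ τ := by
  intro i
  rcases hrel i with h1 | ⟨p, hp, h2, h3⟩
  · exact Or.inl h1
  · exact Or.inr ⟨p, reachable_trans hp hr, h2, h3⟩

lemma condsat_transfer {k : ℕ} {G : DataGraph V A D} {h : V → V}
    (hh : IsDGHom G h) {v : V} {σ τ : Fin k → Option D}
    (hrel : RegRel G h v σ τ) (c : Cond k) :
    CondSat (G.ρ v) σ c ↔ CondSat (G.ρ (h v)) τ c := by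
  induction c with
  | top => simp [CondSat]
  | eq i =>
    simp only [CondSat]
    rcases hrel i with ⟨h1, h2⟩ | ⟨p, hp, h2, h3⟩
    · rw [h1, h2]; simp
    · rw [h2, h3]
      constructor
      · intro he
        have : G.ρ p = G.ρ v := by injection he
        rw [(hh.2 p v hp).mp this]
      · intro he
        have : G.ρ (h p) = G.ρ (h v) := by injection he
        rw [(hh.2 p v hp).mpr this]
  | ne i =>
    simp only [CondSat]
    rcases hrel i with ⟨h1, h2⟩ | ⟨p, hp, h2, h3⟩
    · rw [h1, h2]; simp
    · rw [h2, h3]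
      constructor
      · intro he hc
        have : G.ρ (h p) = G.ρ (h v) := by injection hc
        exact he (by rw [(hh.2 p v hp).mpr this])
      · intro he hc
        have : G.ρ p = G.ρ v := by injection hc
        exact he (by rw [(hh.2 p v hp).mp this])
  | conj c₁ c₂ ih₁ ih₂ => simp only [CondSat]; rw [ih₁, ih₂]
  | disj c₁ c₂ ih₁ ih₂ => simp only [CondSat]; rw [ih₁, ih₂]
  | neg c ih => simp only [CondSat]; rw [ih]

lemma rem_sim {k : ℕ} {G : DataGraph V A D} {h : V → V} (hh : IsDGHom G h) :
    ∀ {e : REM A k} {w : DataPath A D} {σ σ' : Fin k → Option D},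
      REMSat e w σ σ' → ∀ {u v : V}, Connects G u w v →
      ∀ {τ : Fin k → Option D}, RegRel G h u σ τ →
      ∃ (w' : DataPath A D) (τ' : Fin k → Option D),
        REMSat e w' τ τ' ∧ Connects G (h u) w' (h v) ∧ RegRel G h v σ' τ' := by
  intro e w σ σ' hsat
  induction hsat with
  | eps d σ =>
    intro u v hc τ hrel
    cases hc with
    | nil => exact ⟨_, τ, REMSat.eps _ τ, Connects.nil (h u), hrel⟩
  | letter a d₁ d₂ σ =>
    intro u v hc τ hrel
    cases hc with
    | cons he hc' =>
      cases hc' with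
      | nil =>
        refine ⟨⟨G.ρ (h u), [(a, G.ρ (h v))]⟩, τ, REMSat.letter a _ _ τ,
          Connects.cons (hh.1 _ _ _ he) (Connects.nil (h v)), ?_⟩
        exact hrel.mono ⟨_, Connects.cons he (Connects.nil v)⟩
  | plusL hs ih =>
    intro u v hc τ hrel
    obtain ⟨w', τ', h1, h2, h3⟩ := ih hc hrel
    exact ⟨w', τ', REMSat.plusL h1, h2, h3⟩
  | plusR hs ih =>
    intro u v hc τ hrel
    obtain ⟨w', τ', h1, h2, h3⟩ := ih hc hrel
    exact ⟨w', τ', REMSat.plusR h1, h2, h3⟩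
  | concat hlv hs₁ hs₂ ih₁ ih₂ =>
    rename_i e₁ e₂ w₁ w₂ σ₀ σ₁ σ₂
    intro u v hc τ hrel
    have hhd : w₁.head = G.ρ u := by
      have := connects_head hc
      simpa [DataPath.comp] using this
    have hw : (w₁.comp w₂) = ⟨G.ρ u, w₁.tail ++ w₂.tail⟩ := by
      simp [DataPath.comp, hhd]
    rw [hw] at hc
    obtain ⟨z, hz1, hz2⟩ := connects_split hc
    have hw₁ : w₁ = ⟨G.ρ u, w₁.tail⟩ := by cases w₁; simp_all
    rw [← hw₁] at hz1
    have hw₂ : w₂ = ⟨G.ρ z, w₂.tail⟩ := by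
      have h2 : w₁.lastVal = G.ρ z := connects_lastVal hz1
      rw [hlv] at h2
      cases w₂
      simp only [DataPath.mk.injEq]
      exact ⟨h2, trivial⟩
    rw [← hw₂] at hz2
    obtain ⟨w₁', τ₁, hA1, hA2, hA3⟩ := ih₁ hz1 hrel
    obtain ⟨w₂', τ', hB1, hB2, hB3⟩ := ih₂ hz2 hA3
    refine ⟨w₁'.comp w₂', τ', REMSat.concat ?_ hA1 hB1, connects_comp hA2 hB2, hB3⟩
    rw [connects_lastVal hA2, connects_head hB2]
  | iterBase hs ih =>
    intro u v hc τ hrel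
    obtain ⟨w', τ', h1, h2, h3⟩ := ih hc hrel
    exact ⟨w', τ', REMSat.iterBase h1, h2, h3⟩
  | iterStep hlv hs₁ hs₂ ih₁ ih₂ =>
    rename_i e w₁ w₂ σ₀ σ₁ σ₂
    intro u v hc τ hrel
    have hhd : w₁.head = G.ρ u := by
      have := connects_head hc
      simpa [DataPath.comp] using this
    have hw : (w₁.comp w₂) = ⟨G.ρ u, w₁.tail ++ w₂.tail⟩ := by
      simp [DataPath.comp, hhd]
    rw [hw] at hc
    obtain ⟨z, hz1, hz2⟩ := connects_split hc
    have hw₁ : w₁ = ⟨G.ρ u, w₁.tail⟩ := by cases w₁; simp_all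
    rw [← hw₁] at hz1
    have hw₂ : w₂ = ⟨G.ρ z, w₂.tail⟩ := by
      have h2 : w₁.lastVal = G.ρ z := connects_lastVal hz1
      rw [hlv] at h2
      cases w₂
      simp only [DataPath.mk.injEq]
      exact ⟨h2, trivial⟩
    rw [← hw₂] at hz2
    obtain ⟨w₁', τ₁, hA1, hA2, hA3⟩ := ih₁ hz1 hrel
    obtain ⟨w₂', τ', hB1, hB2, hB3⟩ := ih₂ hz2 hA3
    refine ⟨w₁'.comp w₂', τ', REMSat.iterStep ?_ hA1 hB1, connects_comp hA2 hB2, hB3⟩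
    rw [connects_lastVal hA2, connects_head hB2]
  | test hs hcond ih =>
    rename_i e c w σ₀ σ₁
    intro u v hc τ hrel
    obtain ⟨w', τ', h1, h2, h3⟩ := ih hc hrel
    refine ⟨w', τ', REMSat.test h1 ?_, h2, h3⟩
    rw [connects_lastVal h2]
    rw [connects_lastVal hc] at hcond
    exact (condsat_transfer hh h3 c).mp hcond
  | bind hs ih =>
    rename_i rs e w σ₀ σ₁
    intro u v hc τ hrel
    have hhd : w.head = G.ρ u := connects_head hc
    have hrel' : RegRel G h u (updReg σ₀ rs w.head) (updReg τ rs (G.ρ (h u))) := by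
      intro i
      by_cases hm : i ∈ rs
      · exact Or.inr ⟨u, reachable_refl G u, by simp [updReg, hm, hhd], by simp [updReg, hm]⟩
      · rcases hrel i with ⟨h1, h2⟩ | ⟨p, hp, h2, h3⟩
        · exact Or.inl ⟨by simp [updReg, hm, h1], by simp [updReg, hm, h2]⟩
        · exact Or.inr ⟨p, hp, by simp [updReg, hm, h2], by simp [updReg, hm, h3]⟩
    obtain ⟨w', τ', h1, h2, h3⟩ := ih hc hrel'
    refine ⟨w', τ', REMSat.bind ?_, h2, h3⟩
    rw [connects_head h2]
    exact h1

end Sim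


section Expr
variable {V A D : Type}

/-- REMs containing no `bind`. -/
def NoBind {A : Type} {k : ℕ} : REM A k → Prop
  | .eps => True
  | .letter _ => True
  | .plus e₁ e₂ => NoBind e₁ ∧ NoBind e₂
  | .concat e₁ e₂ => NoBind e₁ ∧ NoBind e₂
  | .iter e => NoBind e
  | .test e _ => NoBind e
  | .bind _ _ => False

lemma nobind_preserve {k : ℕ} {e : REM A k} {w : DataPath A D}
    {σ σ' : Fin k → Option D} (hs : REMSat e w σ σ') (hnb : NoBind e) : σ' = σ := by
  induction hs with
  | eps => rfl
  | letter => rfl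
  | plusL _ ih => exact ih hnb.1
  | plusR _ ih => exact ih hnb.2
  | concat _ _ _ ih₁ ih₂ => rw [ih₂ hnb.2, ih₁ hnb.1]
  | iterBase _ ih => exact ih hnb
  | iterStep _ _ _ ih₁ ih₂ => rw [ih₂ hnb, ih₁ hnb]
  | test _ _ ih => exact ih hnb
  | bind _ _ => exact absurd hnb id

def sumLetters (l : List A) : REM A 1 :=
  l.foldr (fun a e => .plus (.letter a) e) .eps

noncomputable def allExpr [Fintype A] : REM A 1 :=
  .plus .eps (.iter (sumLetters (Finset.univ : Finset A).toList))

noncomputable def eqExpr [Fintype A] : REM A 1 := .bind [0] (.test allExpr (.eq 0))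

noncomputable def neExpr [Fintype A] : REM A 1 := .bind [0] (.test allExpr (.ne 0))

lemma nobind_sumLetters (l : List A) : NoBind (sumLetters l) := by
  induction l with
  | nil => trivial
  | cons a l ih => exact ⟨trivial, ih⟩

lemma nobind_allExpr [Fintype A] : NoBind (allExpr (A := A)) :=
  ⟨trivial, nobind_sumLetters _⟩

lemma sumLetters_sat {l : List A} {a : A} (hm : a ∈ l) (d₁ d₂ : D)
    (σ : Fin 1 → Option D) : REMSat (sumLetters l) ⟨d₁, [(a, d₂)]⟩ σ σ := by
  induction l with
  | nil => cases hm
  | cons b l ih =>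
    rcases List.mem_cons.mp hm with h | h
    · subst h; exact REMSat.plusL (REMSat.letter a d₁ d₂ σ)
    · exact REMSat.plusR (ih h)

lemma allExpr_sat [Fintype A] (w : DataPath A D) (σ : Fin 1 → Option D) :
    REMSat allExpr w σ σ := by
  obtain ⟨d, t⟩ := w
  cases t with
  | nil => exact REMSat.plusL (REMSat.eps d σ)
  | cons p t =>
    refine REMSat.plusR ?_
    induction t generalizing d p with
    | nil =>
      exact REMSat.iterBase (sumLetters_sat (by simp) d p.2 σ)
    | cons q t ih =>
      have h1 : REMSat (sumLetters (Finset.univ : Finset A).toList)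
          (⟨d, [p]⟩ : DataPath A D) σ σ := sumLetters_sat (by simp) d p.2 σ
      have := REMSat.iterStep (w₁ := ⟨d, [p]⟩) (w₂ := ⟨p.2, q :: t⟩)
        (by simp [lastVal_single_s19, DataPath.lastVal]) h1 (ih p.2 q)
      simpa [DataPath.comp] using this

lemma eqExpr_mem [Fintype A] {w : DataPath A D} :
    w ∈ REMLang (eqExpr (A := A)) ↔ w.head = w.lastVal := by
  constructor
  · rintro ⟨σ', hs⟩
    cases hs with
    | bind hs' =>
      cases hs' with
      | test hs'' hcond =>
        have := nobind_preserve hs'' nobind_allExpr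
        subst this
        simp only [CondSat, updReg] at hcond
        simp only [List.mem_singleton] at hcond
        simpa using hcond
  · intro hw
    refine ⟨updReg (fun _ => none) [0] w.head, REMSat.bind (REMSat.test (allExpr_sat w _) ?_)⟩
    simp [CondSat, updReg, hw]

lemma neExpr_mem [Fintype A] {w : DataPath A D} :
    w ∈ REMLang (neExpr (A := A)) ↔ w.head ≠ w.lastVal := by
  constructor
  · rintro ⟨σ', hs⟩
    cases hs with
    | bind hs' =>
      cases hs' with
      | test hs'' hcond =>
        have := nobind_preserve hs'' nobind_allExpr
        subst this
        simp only [CondSat, updReg] at hcond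
        simp only [List.mem_singleton] at hcond
        simpa using hcond
  · intro hw
    refine ⟨updReg (fun _ => none) [0] w.head, REMSat.bind (REMSat.test (allExpr_sat w _) ?_)⟩
    simp [CondSat, updReg]
    exact hw

lemma letter_mem {a : A} {w : DataPath A D} :
    w ∈ REMLang ((.letter a : REM A 1)) ↔ ∃ d₁ d₂, w = ⟨d₁, [(a, d₂)]⟩ := by
  constructor
  · rintro ⟨σ', hs⟩
    cases hs with
    | letter a d₁ d₂ => exact ⟨d₁, d₂, rfl⟩
  · rintro ⟨d₁, d₂, rfl⟩
    exact ⟨_, REMSat.letter a d₁ d₂ _⟩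

end Expr


section Canon
variable {V A D : Type}

/-- Build a CRDPQ from a list of conjuncts `(src, tgt, expr)` and an output tuple. -/
noncomputable def mkQuery [Fintype V] {r : ℕ} (L : List (V × V × REM A 1)) (t : Fin r → V) :
    CRDPQ A r where
  nvars := Fintype.card V
  m := L.length
  src i := Fintype.equivFin V (L.get i).1
  tgt i := Fintype.equivFin V (L.get i).2.1
  nreg _ := 1
  expr i := (L.get i).2.2
  out i := Fintype.equivFin V (t i)

lemma mkQuery_eval [Fintype V] {r : ℕ} (G : DataGraph V A D)
    (L : List (V × V × REM A 1)) (t : Fin r → V) (u : Fin r → V) :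
    u ∈ CRDPQEval G (mkQuery L t) ↔
      ∃ h : V → V,
        (∀ c ∈ L, ∃ w : DataPath A D, w ∈ REMLang c.2.2 ∧
            Connects G (h c.1) w (h c.2.1)) ∧ u = h ∘ t := by
  constructor
  · rintro ⟨μ, hμ, rfl⟩
    refine ⟨μ ∘ Fintype.equivFin V, ?_, ?_⟩
    · intro c hc
      obtain ⟨i, hi⟩ := List.get_of_mem hc
      have := hμ i
      simp only [mkQuery] at this
      rw [hi] at this
      exact this
    · rfl
  · rintro ⟨h, hL, rfl⟩
    refine ⟨h ∘ (Fintype.equivFin V).symm, ?_, ?_⟩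
    · intro i
      have := hL (L[(i : ℕ)]) (by simp)
      simpa [mkQuery, List.get_eq_getElem] using this
    · funext i
      simp [mkQuery]

/-- The canonical conjunct list of a data graph. -/
noncomputable def conjList (G : DataGraph V A D) [Fintype V] [Fintype A] :
    List (V × V × REM A 1) :=
  ((Set.toFinite {x : V × A × V | x ∈ G.E}).toFinset.toList.map
      fun x => (x.1, x.2.2, REM.letter x.2.1))
  ++ ((Set.toFinite {p : V × V | Reachable G p.1 p.2 ∧ G.ρ p.1 = G.ρ p.2}).toFinset.toList.map
      fun p => (p.1, p.2, eqExpr))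
  ++ ((Set.toFinite {p : V × V | Reachable G p.1 p.2 ∧ G.ρ p.1 ≠ G.ρ p.2}).toFinset.toList.map
      fun p => (p.1, p.2, neExpr))

lemma mem_conjList {G : DataGraph V A D} [Fintype V] [Fintype A]
    {c : V × V × REM A 1} :
    c ∈ conjList G ↔
      (∃ a : A, (c.1, a, c.2.1) ∈ G.E ∧ c.2.2 = REM.letter a) ∨
      (Reachable G c.1 c.2.1 ∧ G.ρ c.1 = G.ρ c.2.1 ∧ c.2.2 = eqExpr) ∨
      (Reachable G c.1 c.2.1 ∧ G.ρ c.1 ≠ G.ρ c.2.1 ∧ c.2.2 = neExpr) := by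
  obtain ⟨p, q, e⟩ := c
  simp only [conjList, List.mem_append, List.mem_map, Finset.mem_toList,
    Set.Finite.mem_toFinset, Set.mem_setOf_eq]
  constructor
  · rintro ((⟨⟨x1, x2, x3⟩, hx, heq⟩ | ⟨⟨p1, p2⟩, hx, heq⟩) | ⟨⟨p1, p2⟩, hx, heq⟩)
    · rw [Prod.mk.injEq, Prod.mk.injEq] at heq
      obtain ⟨rfl, rfl, rfl⟩ := heq
      exact Or.inl ⟨x2, hx, rfl⟩
    · rw [Prod.mk.injEq, Prod.mk.injEq] at heq
      obtain ⟨rfl, rfl, rfl⟩ := heq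
      exact Or.inr (Or.inl ⟨hx.1, hx.2, rfl⟩)
    · rw [Prod.mk.injEq, Prod.mk.injEq] at heq
      obtain ⟨rfl, rfl, rfl⟩ := heq
      exact Or.inr (Or.inr ⟨hx.1, hx.2, rfl⟩)
  · rintro (⟨a, ha, rfl⟩ | ⟨h1, h2, rfl⟩ | ⟨h1, h2, rfl⟩)
    · exact Or.inl (Or.inl ⟨(p, a, q), ha, rfl⟩)
    · exact Or.inl (Or.inr ⟨(p, q), ⟨h1, h2⟩, rfl⟩)
    · exact Or.inr ⟨(p, q), ⟨h1, h2⟩, rfl⟩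

/-- The conjuncts of the canonical query hold for `h` iff `h` is a homomorphism. -/
lemma conjList_iff_hom [Fintype V] [Fintype A] (G : DataGraph V A D) (h : V → V) :
    (∀ c ∈ conjList G, ∃ w : DataPath A D, w ∈ REMLang c.2.2 ∧
        Connects G (h c.1) w (h c.2.1)) ↔ IsDGHom G h := by
  constructor
  · intro hAll
    constructor
    · intro p q a hpq
      obtain ⟨w, hw, hconn⟩ := hAll (p, q, REM.letter a)
        (mem_conjList.mpr (Or.inl ⟨a, hpq, rfl⟩))
      obtain ⟨d₁, d₂, rfl⟩ := letter_mem.mp hw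
      cases hconn with
      | cons he hc =>
        cases hc with
        | nil => exact he
    · intro p q hr
      constructor
      · intro heq
        obtain ⟨w, hw, hconn⟩ := hAll (p, q, eqExpr)
          (mem_conjList.mpr (Or.inr (Or.inl ⟨hr, heq, rfl⟩)))
        have := eqExpr_mem.mp hw
        rw [connects_head hconn, connects_lastVal hconn] at this
        exact this
      · intro heq
        by_contra hne
        obtain ⟨w, hw, hconn⟩ := hAll (p, q, neExpr)
          (mem_conjList.mpr (Or.inr (Or.inr ⟨hr, hne, rfl⟩)))
        have := neExpr_mem.mp hw
        rw [connects_head hconn, connects_lastVal hconn] at this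
        exact this heq
  · intro hh c hc
    rcases mem_conjList.mp hc with ⟨a, ha, he⟩ | ⟨h1, h2, he⟩ | ⟨h1, h2, he⟩
    · refine ⟨⟨G.ρ (h c.1), [(a, G.ρ (h c.2.1))]⟩, ?_, ?_⟩
      · rw [he]; exact letter_mem.mpr ⟨_, _, rfl⟩
      · exact Connects.cons (hh.1 _ _ _ ha) (Connects.nil _)
    · obtain ⟨w, hw⟩ := hom_reachable hh h1
      refine ⟨w, ?_, hw⟩
      rw [he]
      rw [eqExpr_mem, connects_head hw, connects_lastVal hw]
      exact (hh.2 _ _ h1).mp h2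
    · obtain ⟨w, hw⟩ := hom_reachable hh h1
      refine ⟨w, ?_, hw⟩
      rw [he]
      rw [neExpr_mem, connects_head hw, connects_lastVal hw]
      exact fun hc' => h2 ((hh.2 _ _ h1).mpr hc')

end Canon


lemma id_isDGHom {V A D : Type} (G : DataGraph V A D) : IsDGHom G id :=
  ⟨fun _ _ _ h => h, fun _ _ _ => Iff.rfl⟩

/-- a set of tuples of nodes is UCRDPQ-definable iff it is closed
under all data graph homomorphisms. -/
theorem ucrdpq_definable_iff_hom_closed {V A D : Type}
    [Fintype V] [Fintype A] [Countable D] [Infinite D]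
    (G : DataGraph V A D) (r : ℕ) (S : Set (Fin r → V)) :
    UCRDPQDefinable G S ↔
      ∀ h : V → V, IsDGHom G h → ∀ t ∈ S, h ∘ t ∈ S := by
  constructor
  · rintro ⟨Qs, rfl⟩ h hh t ht
    simp only [Set.mem_setOf_eq] at ht ⊢
    obtain ⟨Q, hQ, μ, hμ, rfl⟩ := ht
    refine ⟨Q, hQ, h ∘ μ, ?_, rfl⟩
    intro i
    obtain ⟨w, hw, hc⟩ := hμ i
    obtain ⟨σ', hs⟩ := hw
    obtain ⟨w', τ', h1, h2, h3⟩ := rem_sim hh hs hc (τ := fun _ => none)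
      (fun _ => Or.inl ⟨rfl, rfl⟩)
    exact ⟨w', ⟨τ', h1⟩, h2⟩
  · intro hcl
    refine ⟨(Set.toFinite S).toFinset.toList.map (fun t => mkQuery (conjList G) t), ?_⟩
    ext u
    simp only [Set.mem_setOf_eq, List.mem_map]
    constructor
    · intro hu
      refine ⟨mkQuery (conjList G) u, ⟨u, ?_, rfl⟩, ?_⟩
      · rw [Finset.mem_toList, Set.Finite.mem_toFinset]
        exact hu
      · rw [mkQuery_eval]
        exact ⟨id, (conjList_iff_hom G id).mpr (id_isDGHom G), rfl⟩
    · rintro ⟨Q, ⟨t, ht, rfl⟩, hu⟩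
      rw [Finset.mem_toList, Set.Finite.mem_toFinset] at ht
      rw [mkQuery_eval] at hu
      obtain ⟨h, hc, rfl⟩ := hu
      exact hcl h ((conjList_iff_hom G h).mp hc) t ht
end
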